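/- For every real number t > 0, define V₁₀(t) = 8t(2 + 8t⁻³) if t⁻³ ≤ 1/8 and V₁₀(t) = 24t if t⁻³ ≥ 1/8. Then V₁₀(t) ∈ E(t), and every element e of E(t) with e ∉ {γ₁(t), γ₂(t), γ₃(t), γ₄(t), γ₅(t), γ₆(t), γ₇(t), 8t, t(14 + t⁻³)} satisfies e ≥ V₁₀(t). -/

import Mathlib

/-!
The three families are increasing in their index, so apart from the excluded values
`γ₁, …, γ₇`, `α₁ = γ₁`, `α₃ = t(14 + t⁻³)` and `β₂ = 8t`, every element of `E(t)` is at least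
`γ₈(t)`, `α₅(t)` or `β₄(t) = 24t`; and `α₅(t) = t(34 + t⁻³) > 24t`. Hence the bound is
`min (γ₈(t), β₄(t))`, and `γ₈(t) ≤ β₄(t)` exactly when `t⁻³ ≤ 1/8`.
-/

/-- `γ_n(t) = t·n·(2 + n·t⁻³)` -/
noncomputable def gammaF (t : ℝ) (n : ℕ) : ℝ := t * n * (2 + n * (t ^ 3)⁻¹)

/-- `α_k(t) = t·(k(k+2) − 1 + t⁻³)` -/
noncomputable def alphaF (t : ℝ) (k : ℕ) : ℝ := t * (k * (k + 2) - 1 + (t ^ 3)⁻¹)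

/-- `β_l(t) = t·l·(l+2)` -/
noncomputable def betaF (t : ℝ) (l : ℕ) : ℝ := t * l * (l + 2)

/-- The set `E(t)` of nonzero eigenvalues of the unit-volume Berger sphere Laplacian. -/
def EV (t : ℝ) : Set ℝ :=
  {x | ∃ n : ℕ, 1 ≤ n ∧ x = gammaF t n} ∪
  {x | ∃ k : ℕ, Odd k ∧ 1 ≤ k ∧ x = alphaF t k} ∪
  {x | ∃ l : ℕ, Even l ∧ 2 ≤ l ∧ x = betaF t l}

lemma gammaF_mono {t : ℝ} (ht : 0 ≤ t) : Monotone (gammaF t) := fun m n hmn => by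
  have : (m : ℝ) ≤ n := Nat.cast_le.2 hmn
  unfold gammaF
  gcongr

lemma alphaF_mono {t : ℝ} (ht : 0 ≤ t) : Monotone (alphaF t) := fun m n hmn => by
  have : (m : ℝ) ≤ n := Nat.cast_le.2 hmn
  unfold alphaF
  gcongr

lemma betaF_mono {t : ℝ} (ht : 0 ≤ t) : Monotone (betaF t) := fun m n hmn => by
  have : (m : ℝ) ≤ n := Nat.cast_le.2 hmn
  unfold betaF
  gcongr

lemma alphaF_one (t : ℝ) : alphaF t 1 = gammaF t 1 := by
  unfold alphaF gammaF; push_cast; ring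

lemma alphaF_three (t : ℝ) : alphaF t 3 = t * (14 + (t ^ 3)⁻¹) := by
  unfold alphaF; push_cast; ring

lemma betaF_two (t : ℝ) : betaF t 2 = 8 * t := by
  unfold betaF; push_cast; ring

lemma betaF_four (t : ℝ) : betaF t 4 = 24 * t := by
  unfold betaF; push_cast; ring

lemma gammaF_eight (t : ℝ) : gammaF t 8 = 8 * t * (2 + 8 * (t ^ 3)⁻¹) := by
  unfold gammaF; push_cast; ring

lemma betaF_four_le_alphaF_five {t : ℝ} (ht : 0 < t) : betaF t 4 ≤ alphaF t 5 := by
  have : 0 < t * (t ^ 3)⁻¹ := by positivity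
  rw [betaF_four]
  unfold alphaF
  push_cast
  linarith

noncomputable def lambda10 (t : ℝ) : ℝ := min (gammaF t 8) (betaF t 4)

namespace lambda10

lemma mem_EV (t : ℝ) : lambda10 t ∈ EV t := by
  rcases min_choice (gammaF t 8) (betaF t 4) with h | h <;> rw [lambda10, h]
  · exact Or.inl (Or.inl ⟨8, by norm_num, rfl⟩)
  · exact Or.inr ⟨4, by decide, by norm_num, rfl⟩

variable {t : ℝ}

lemma eq_of_le_one_eighth (ht : 0 < t) (h : (t ^ 3)⁻¹ ≤ 1 / 8) :
    lambda10 t = 8 * t * (2 + 8 * (t ^ 3)⁻¹) := by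
  have hle : gammaF t 8 ≤ betaF t 4 := by rw [gammaF_eight, betaF_four]; nlinarith
  rw [lambda10, min_eq_left hle, gammaF_eight]

lemma eq_of_one_eighth_le (ht : 0 < t) (h : 1 / 8 ≤ (t ^ 3)⁻¹) : lambda10 t = 24 * t := by
  have hle : betaF t 4 ≤ gammaF t 8 := by rw [gammaF_eight, betaF_four]; nlinarith
  rw [lambda10, min_eq_right hle, betaF_four]

lemma le_gammaF (ht : 0 ≤ t) {n : ℕ} (hn : 8 ≤ n) : lambda10 t ≤ gammaF t n :=
  (min_le_left _ _).trans (gammaF_mono ht hn)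

lemma le_alphaF (ht : 0 < t) {k : ℕ} (hk : 5 ≤ k) : lambda10 t ≤ alphaF t k :=
  (min_le_right _ _).trans ((betaF_four_le_alphaF_five ht).trans (alphaF_mono ht.le hk))

lemma le_betaF (ht : 0 ≤ t) {l : ℕ} (hl : 4 ≤ l) : lambda10 t ≤ betaF t l :=
  (min_le_right _ _).trans (betaF_mono ht hl)

lemma le_of_mem_EV (ht : 0 < t) {e : ℝ} (he : e ∈ EV t)
    (hne : e ∉ ({gammaF t 1, gammaF t 2, gammaF t 3, gammaF t 4, gammaF t 5,
      gammaF t 6, gammaF t 7, 8 * t, t * (14 + (t ^ 3)⁻¹)} : Set ℝ)) :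
    lambda10 t ≤ e := by
  rcases he with (⟨n, hn, rfl⟩ | ⟨k, hk, hk1, rfl⟩) | ⟨l, hl, hl2, rfl⟩
  · refine le_gammaF ht.le (not_lt.1 fun h => hne ?_)
    interval_cases n <;> simp
  · refine le_alphaF ht (not_lt.1 fun h => hne ?_)
    interval_cases k <;> simp_all [alphaF_one, alphaF_three, Nat.odd_iff]
  · refine le_betaF ht.le (not_lt.1 fun h => hne ?_)
    interval_cases l <;> simp_all [betaF_two, Nat.even_iff]

end lambda10

theorem berger_lambda10 (t : ℝ) (ht : 0 < t) :
    ∃ V : ℝ,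
      ((t ^ 3)⁻¹ ≤ 1 / 8 → V = 8 * t * (2 + 8 * (t ^ 3)⁻¹)) ∧
      (1 / 8 ≤ (t ^ 3)⁻¹ → V = 24 * t) ∧
      V ∈ EV t ∧
      ∀ e ∈ EV t, e ∉ ({gammaF t 1, gammaF t 2, gammaF t 3, gammaF t 4, gammaF t 5, gammaF t 6, gammaF t 7, 8 * t, t * (14 + (t ^ 3)⁻¹)} : Set ℝ) → V ≤ e :=
  ⟨lambda10 t, lambda10.eq_of_le_one_eighth ht, lambda10.eq_of_one_eighth_le ht,
    lambda10.mem_EV t, fun _ he hne => lambda10.le_of_mem_EV ht he hne⟩
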